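/- arXiv:2107.14488 — 2 statements merged into one kernel-verified Lean document; each statement's English description precedes it below -/
import Mathlib

section
/- Define Z : ℂ × ℝ → ℂ by Z(β, α) = (1/√(2π)) · ∫_ℝ exp(−x²/2 + i·α·x³ + β·x) dx. Then for each fixed α the function β ↦ Z(β, α) is complex-differentiable on ℂ, for each fixed β the function α ↦ Z(β, α) is differentiable on ℝ, and for all (β, α): (1 − 3·i·α·β)·∂Z/∂β − 9·i·α²·∂Z/∂α − (3·i·α + β)·Z(β, α) = 0. -/
/-!
Differentiating under the integral sign (the integrand and its parameter derivatives are
dominated by `|x|ⁿ exp (-x²/2 + C|x|)`) identifies `∂Z/∂β` and `∂Z/∂α` with the moments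
`M₁` and `i M₃` of the integrand `e^φ`, `φ = -x²/2 + iαx³ + βx`, while `Z` is `M₀` (all up to
the factor `1/√(2π)`). Integrating the exact derivatives `(xⁿ e^φ)' = (n xⁿ⁻¹ + xⁿ φ') e^φ`
over `ℝ` gives `-M₁ + 3iαM₂ + βM₀ = 0` (`n = 0`) and `M₀ + βM₁ - M₂ + 3iαM₃ = 0` (`n = 1`);
subtracting `3iα` times the second from minus the first eliminates `M₂` and is the equation.
-/

open MeasureTheory Real

/-- The generating function of the cubic model with source `β`:
`Z(β, α) = (1/√(2π)) ∫ exp(-x²/2 + iαx³ + βx) dx`. -/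
noncomputable def cubicZ (β : ℂ) (α : ℝ) : ℂ :=
  (1 / Real.sqrt (2 * π) : ℝ) *
    ∫ x : ℝ, Complex.exp (-(x : ℂ) ^ 2 / 2 + Complex.I * α * (x : ℂ) ^ 3 + β * x)

open Complex (I)
open scoped Nat

lemma integrable_exp_neg_sq_div_two_add_mul (c : ℝ) :
    Integrable fun x : ℝ => rexp (-x ^ 2 / 2 + c * x) := by
  refine (integrable_cexp_quadratic (b := 1 / 2) (by norm_num) c 0).norm.congr
    (.of_forall fun x => ?_)
  simp only [Complex.norm_exp]
  congr 1
  simp [← Complex.ofReal_pow]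
  ring

lemma integrable_exp_neg_sq_div_two_add_mul_abs (c : ℝ) :
    Integrable fun x : ℝ => rexp (-x ^ 2 / 2 + c * |x|) := by
  refine ((integrable_exp_neg_sq_div_two_add_mul c).add
    (integrable_exp_neg_sq_div_two_add_mul (-c))).mono' (by fun_prop) (.of_forall fun x => ?_)
  rw [Real.norm_of_nonneg (exp_nonneg _)]
  rcases abs_cases x with ⟨hx, -⟩ | ⟨hx, -⟩ <;> rw [hx]
  · exact le_add_of_nonneg_right (exp_nonneg _)
  · rw [mul_neg, ← neg_mul]
    exact le_add_of_nonneg_left (exp_nonneg _)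

lemma pow_abs_le_factorial_mul_exp_abs (n : ℕ) (x : ℝ) : |x| ^ n ≤ n ! * rexp |x| := by
  have := pow_div_factorial_le_exp _ (abs_nonneg x) n
  rwa [div_le_iff₀' (by positivity)] at this

noncomputable def cubicIntegrand (β : ℂ) (α : ℝ) (x : ℝ) : ℂ :=
  Complex.exp (-(x : ℂ) ^ 2 / 2 + I * α * (x : ℂ) ^ 3 + β * x)

lemma norm_cubicIntegrand (β : ℂ) (α x : ℝ) :
    ‖cubicIntegrand β α x‖ = rexp (-x ^ 2 / 2 + β.re * x) := by
  rw [cubicIntegrand, Complex.norm_exp]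
  congr 1
  simp [← Complex.ofReal_pow]

@[fun_prop]
lemma continuous_cubicIntegrand (β : ℂ) (α : ℝ) : Continuous (cubicIntegrand β α) := by
  unfold cubicIntegrand
  fun_prop

lemma norm_pow_mul_cubicIntegrand_le (n : ℕ) (β : ℂ) (α x : ℝ) :
    ‖(x : ℂ) ^ n * cubicIntegrand β α x‖ ≤ n ! * rexp (-x ^ 2 / 2 + (|β.re| + 1) * |x|) := by
  have hre : β.re * x ≤ |β.re| * |x| := (le_abs_self _).trans (abs_mul _ _).le
  calc ‖(x : ℂ) ^ n * cubicIntegrand β α x‖ = |x| ^ n * rexp (-x ^ 2 / 2 + β.re * x) := by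
        rw [norm_mul, norm_pow, Complex.norm_real, norm_cubicIntegrand, Real.norm_eq_abs]
    _ ≤ n ! * rexp |x| * rexp (-x ^ 2 / 2 + β.re * x) := by
        gcongr; exact pow_abs_le_factorial_mul_exp_abs n x
    _ ≤ n ! * rexp (-x ^ 2 / 2 + (|β.re| + 1) * |x|) := by
        rw [mul_assoc, ← exp_add]
        gcongr ?_ * rexp ?_
        linarith

lemma integrable_pow_mul_cubicIntegrand (n : ℕ) (β : ℂ) (α : ℝ) :
    Integrable fun x : ℝ => (x : ℂ) ^ n * cubicIntegrand β α x :=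
  ((integrable_exp_neg_sq_div_two_add_mul_abs _).const_mul _).mono'
    (by fun_prop) (.of_forall (norm_pow_mul_cubicIntegrand_le n β α))

lemma hasDerivAt_pow_mul_cubicIntegrand (n : ℕ) (β : ℂ) (α x : ℝ) :
    HasDerivAt (fun y : ℝ => (y : ℂ) ^ n * cubicIntegrand β α y)
      ((n * (x : ℂ) ^ (n - 1) + (x : ℂ) ^ n * (-x + 3 * I * α * (x : ℂ) ^ 2 + β)) *
        cubicIntegrand β α x) x := by
  have hexponent : HasDerivAt (fun z : ℂ => -z ^ 2 / 2 + I * α * z ^ 3 + β * z)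
      (-x + 3 * I * α * (x : ℂ) ^ 2 + β) x := by
    refine ((((hasDerivAt_pow 2 (x : ℂ)).neg.div_const 2).add
      ((hasDerivAt_pow 3 (x : ℂ)).const_mul (I * α))).add
        ((hasDerivAt_id (x : ℂ)).const_mul β)).congr_deriv ?_
    norm_num
    ring
  exact ((hasDerivAt_pow n (x : ℂ)).mul hexponent.cexp).comp_ofReal.congr_deriv
    (by simp only [cubicIntegrand]; ring)

noncomputable def cubicMoment (β : ℂ) (α : ℝ) (n : ℕ) : ℂ :=
  ∫ x : ℝ, (x : ℂ) ^ n * cubicIntegrand β α x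

/-- Integration by parts against `xⁿ`; at `n = 0` the first term vanishes whatever
`cubicMoment β α (0 - 1)` is. -/
lemma cubicMoment_recurrence (n : ℕ) (β : ℂ) (α : ℝ) :
    n * cubicMoment β α (n - 1) - cubicMoment β α (n + 1) +
      3 * I * α * cubicMoment β α (n + 2) + β * cubicMoment β α n = 0 := by
  have hint (k : ℕ) := integrable_pow_mul_cubicIntegrand k β α
  have hderiv : ∀ x : ℝ, HasDerivAt (fun y : ℝ => (y : ℂ) ^ n * cubicIntegrand β α y)
      (n * ((x : ℂ) ^ (n - 1) * cubicIntegrand β α x) - (x : ℂ) ^ (n + 1) * cubicIntegrand β α x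
        + 3 * I * α * ((x : ℂ) ^ (n + 2) * cubicIntegrand β α x)
        + β * ((x : ℂ) ^ n * cubicIntegrand β α x)) x := fun x =>
    (hasDerivAt_pow_mul_cubicIntegrand n β α x).congr_deriv (by ring)
  have h₁ := (hint (n - 1)).const_mul (n : ℂ)
  have h₂ := h₁.sub' (hint (n + 1))
  have h₃ := (hint (n + 2)).const_mul (3 * I * α)
  have h₄ := (hint n).const_mul β
  have := integral_eq_zero_of_hasDerivAt_of_integrable hderiv ((h₂.fun_add h₃).fun_add h₄) (hint n)
  rwa [integral_add (h₂.fun_add h₃) h₄, integral_add h₂ h₃, integral_sub h₁ (hint _),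
    integral_const_mul, integral_const_mul, integral_const_mul] at this

lemma cubicZ_eq_cubicMoment (β : ℂ) (α : ℝ) :
    cubicZ β α = (1 / √(2 * π) : ℝ) * cubicMoment β α 0 := by
  simp [cubicZ, cubicMoment, cubicIntegrand]

lemma hasDerivAt_integral_cubicIntegrand_source (β : ℂ) (α : ℝ) :
    HasDerivAt (fun b : ℂ => ∫ x : ℝ, cubicIntegrand b α x) (cubicMoment β α 1) β := by
  have hbound : ∀ x : ℝ, ∀ b ∈ Metric.ball β 1,
      ‖(x : ℂ) ^ 1 * cubicIntegrand b α x‖ ≤ 1 ! * rexp (-x ^ 2 / 2 + (|β.re| + 2) * |x|) := by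
    intro x b hb
    have hre : |b.re| ≤ |β.re| + 1 := by
      have := (Complex.abs_re_le_norm (b - β)).trans (mem_ball_iff_norm.mp hb).le
      rw [Complex.sub_re] at this
      linarith [abs_sub_abs_le_abs_sub b.re β.re]
    refine (norm_pow_mul_cubicIntegrand_le 1 b α x).trans ?_
    gcongr _ * rexp (_ + ?_ * _)
    linarith
  have hderiv : ∀ x : ℝ, ∀ b : ℂ,
      HasDerivAt (cubicIntegrand · α x) ((x : ℂ) ^ 1 * cubicIntegrand b α x) b := by
    intro x b
    refine (((hasDerivAt_id b).mul_const (x : ℂ)).const_add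
      (-(x : ℂ) ^ 2 / 2 + I * α * (x : ℂ) ^ 3)).cexp.congr_deriv ?_
    simp only [cubicIntegrand, id_eq]
    ring
  exact (hasDerivAt_integral_of_dominated_loc_of_deriv_le (Metric.ball_mem_nhds β one_pos)
    (.of_forall fun b => (continuous_cubicIntegrand b α).aestronglyMeasurable)
    (by simpa using integrable_pow_mul_cubicIntegrand 0 β α) (by fun_prop)
    (.of_forall hbound) ((integrable_exp_neg_sq_div_two_add_mul_abs _).const_mul _)
    (.of_forall fun x b _ => hderiv x b)).2

lemma hasDerivAt_integral_cubicIntegrand_coupling (β : ℂ) (α : ℝ) :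
    HasDerivAt (fun a : ℝ => ∫ x : ℝ, cubicIntegrand β a x) (I * cubicMoment β α 3) α := by
  have hderiv : ∀ x a : ℝ,
      HasDerivAt (cubicIntegrand β · x) (I * ((x : ℂ) ^ 3 * cubicIntegrand β a x)) a := by
    intro x a
    refine ((((Complex.ofRealCLM.hasDerivAt (x := a)).const_mul I).mul_const ((x : ℂ) ^ 3)
      |>.const_add (-(x : ℂ) ^ 2 / 2)).add_const (β * x)).cexp.congr_deriv ?_
    simp only [cubicIntegrand, Complex.ofRealCLM_apply, Complex.ofReal_one]
    ring
  have hbound : ∀ x a : ℝ,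
      ‖I * ((x : ℂ) ^ 3 * cubicIntegrand β a x)‖ ≤
        3 ! * rexp (-x ^ 2 / 2 + (|β.re| + 1) * |x|) := by
    intro x a
    rw [norm_mul, Complex.norm_I, one_mul]
    exact norm_pow_mul_cubicIntegrand_le 3 β a x
  have := (hasDerivAt_integral_of_dominated_loc_of_deriv_le (Metric.ball_mem_nhds α one_pos)
    (.of_forall fun a => (continuous_cubicIntegrand β a).aestronglyMeasurable)
    (by simpa using integrable_pow_mul_cubicIntegrand 0 β α) (by fun_prop)
    (.of_forall fun x a _ => hbound x a)
    ((integrable_exp_neg_sq_div_two_add_mul_abs _).const_mul _)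
    (.of_forall fun x a _ => hderiv x a)).2
  rwa [integral_const_mul] at this

/-- `Z` is complex-differentiable in `β`, real-differentiable in `α`, and satisfies
`(1 - 3iαβ) ∂Z/∂β - 9iα² ∂Z/∂α - (3iα + β) Z = 0`. -/
theorem cubicZ_first_equation :
    (∀ α : ℝ, Differentiable ℂ (fun β : ℂ => cubicZ β α)) ∧
    (∀ β : ℂ, Differentiable ℝ (fun α : ℝ => cubicZ β α)) ∧
    ∀ (β : ℂ) (α : ℝ),
      (1 - 3 * Complex.I * α * β) * deriv (fun b : ℂ => cubicZ b α) β -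
        9 * Complex.I * (α : ℂ) ^ 2 * deriv (fun a : ℝ => cubicZ β a) α -
        (3 * Complex.I * α + β) * cubicZ β α = 0 := by
  set c : ℂ := ((1 / √(2 * π) : ℝ) : ℂ)
  have hsource (β : ℂ) (α : ℝ) :
      HasDerivAt (fun b : ℂ => cubicZ b α) (c * cubicMoment β α 1) β :=
    (hasDerivAt_integral_cubicIntegrand_source β α).const_mul c
  have hcoupling (β : ℂ) (α : ℝ) :
      HasDerivAt (fun a : ℝ => cubicZ β a) (c * (I * cubicMoment β α 3)) α :=
    (hasDerivAt_integral_cubicIntegrand_coupling β α).const_mul c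
  refine ⟨fun α β => (hsource β α).differentiableAt,
    fun β α => (hcoupling β α).differentiableAt, fun β α => ?_⟩
  have h₀ := cubicMoment_recurrence 0 β α
  have h₁ := cubicMoment_recurrence 1 β α
  rw [(hsource β α).deriv, (hcoupling β α).deriv, cubicZ_eq_cubicMoment]
  linear_combination (-c) * h₀ - (3 * c * I * α) * h₁
end

section
/- Define Z : ℂ × ℝ → ℂ by Z(β, α) = (1/√(2π)) · ∫_ℝ exp(−x²/2 + i·α·x³ + β·x) dx. Then for each fixed α the function β ↦ Z(β, α) is twice complex-differentiable on ℂ and satisfies, for all (β, α), the Dyson–Schwinger equation: 3·i·α·∂²Z/∂β² − ∂Z/∂β + β·Z(β, α) = 0. -/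
/-!
With the action `S(x) = -x²/2 + iαx³`, `Z(β, α)` is `1/√(2π)` times the two-sided Laplace
transform of the weight `e^{S}`, whose modulus is the Gaussian `e^{-x²/2}`. Gaussian decay
dominates every `|x|ⁿ e^{c|x|}`, so one may differentiate under the integral sign: `Z` is entire
in `β` and `∂ⁿZ/∂βⁿ` is the `n`-th moment `∫ xⁿ e^{S(x) + βx} dx / √(2π)`. The Dyson–Schwinger
equation is then `∫ (d/dx) e^{S(x) + βx} dx = 0`, since `(d/dx) e^{S + βx} = (S' + β) e^{S + βx}`
and `e^{S + βx}` is integrable.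
-/

open MeasureTheory Real

open Complex Filter Nat

theorem integrable_pow_abs_mul_exp_neg_mul_sq_add_mul_abs {b : ℝ} (hb : 0 < b) (c : ℝ) (n : ℕ) :
    Integrable fun x : ℝ => |x| ^ n * Real.exp (-b * x ^ 2 + c * |x|) := by
  refine ((integrable_exp_neg_mul_sq (half_pos hb)).const_mul
    (n ! * Real.exp ((c + 1) ^ 2 / (2 * b)))).mono' (by fun_prop) (ae_of_all _ fun x => ?_)
  have hpow : |x| ^ n ≤ n ! * Real.exp |x| := by
    have := Real.pow_div_factorial_le_exp (x := |x|) (abs_nonneg x) n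
    rwa [div_le_iff₀ (by positivity), mul_comm] at this
  have hsq : -b * x ^ 2 + (c + 1) * |x| ≤ (c + 1) ^ 2 / (2 * b) + -(b / 2) * x ^ 2 := by
    rw [div_add' _ _ _ (by positivity), le_div_iff₀ (by positivity)]
    nlinarith [sq_nonneg (b * |x| - (c + 1)), congrArg (b ^ 2 * ·) (sq_abs x)]
  rw [Real.norm_of_nonneg (by positivity)]
  calc |x| ^ n * Real.exp (-b * x ^ 2 + c * |x|)
      ≤ n ! * Real.exp |x| * Real.exp (-b * x ^ 2 + c * |x|) := by gcongr
    _ = n ! * Real.exp (-b * x ^ 2 + (c + 1) * |x|) := by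
      rw [mul_assoc, ← Real.exp_add]; ring_nf
    _ ≤ n ! * Real.exp ((c + 1) ^ 2 / (2 * b) + -(b / 2) * x ^ 2) := by gcongr
    _ = n ! * Real.exp ((c + 1) ^ 2 / (2 * b)) * Real.exp (-(b / 2) * x ^ 2) := by
      rw [Real.exp_add, mul_assoc]

/-- For Gaussian-decaying `w`, the `n`-th derivative of the two-sided Laplace transform
`β ↦ ∫ w(x) e^{βx} dx`. -/
noncomputable def laplaceMoment (w : ℝ → ℂ) (n : ℕ) (β : ℂ) : ℂ :=
  ∫ x : ℝ, (x : ℂ) ^ n * w x * cexp (β * x)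

section GaussianDecay

variable {w : ℝ → ℂ} {b : ℝ}

theorem norm_pow_mul_mul_cexp_le (hw : ∀ x, ‖w x‖ ≤ Real.exp (-b * x ^ 2)) {β : ℂ} {c : ℝ}
    (hβ : ‖β‖ ≤ c) (n : ℕ) (x : ℝ) :
    ‖(x : ℂ) ^ n * w x * cexp (β * x)‖ ≤ |x| ^ n * Real.exp (-b * x ^ 2 + c * |x|) := by
  have hre : (β * x).re ≤ c * |x| :=
    calc (β * x).re = β.re * x := by simp
      _ ≤ |β.re| * |x| := by rw [← abs_mul]; exact le_abs_self _
      _ ≤ c * |x| := by gcongr; exact (abs_re_le_norm β).trans hβ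
  rw [norm_mul, norm_mul, norm_pow, norm_real, Real.norm_eq_abs, norm_exp, Real.exp_add,
    mul_assoc]
  gcongr
  exact hw x

theorem integrable_pow_mul_mul_cexp (hb : 0 < b) (hw_meas : AEStronglyMeasurable w)
    (hw : ∀ x, ‖w x‖ ≤ Real.exp (-b * x ^ 2)) (n : ℕ) (β : ℂ) :
    Integrable fun x : ℝ => (x : ℂ) ^ n * w x * cexp (β * x) :=
  (integrable_pow_abs_mul_exp_neg_mul_sq_add_mul_abs hb ‖β‖ n).mono' (by fun_prop)
    (ae_of_all _ (norm_pow_mul_mul_cexp_le hw le_rfl n))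

theorem hasDerivAt_laplaceMoment (hb : 0 < b) (hw_meas : AEStronglyMeasurable w)
    (hw : ∀ x, ‖w x‖ ≤ Real.exp (-b * x ^ 2)) (n : ℕ) (β₀ : ℂ) :
    HasDerivAt (laplaceMoment w n) (laplaceMoment w (n + 1) β₀) β₀ := by
  have hbound : ∀ x : ℝ, ∀ β ∈ Metric.ball β₀ 1,
      ‖(x : ℂ) ^ (n + 1) * w x * cexp (β * x)‖
        ≤ |x| ^ (n + 1) * Real.exp (-b * x ^ 2 + (‖β₀‖ + 1) * |x|) := fun x β hβ =>
    norm_pow_mul_mul_cexp_le hw ((norm_le_norm_add_norm_sub' β β₀).trans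
      (by rw [← dist_eq_norm]; linarith [Metric.mem_ball.mp hβ])) _ x
  have hderiv : ∀ x : ℝ, ∀ β ∈ Metric.ball β₀ 1,
      HasDerivAt (fun β : ℂ => (x : ℂ) ^ n * w x * cexp (β * x))
        ((x : ℂ) ^ (n + 1) * w x * cexp (β * x)) β :=
    fun x β _ =>
      (((hasDerivAt_id β).mul_const (x : ℂ)).cexp.const_mul ((x : ℂ) ^ n * w x)).congr_deriv
        (by simp only [id]; ring)
  exact (hasDerivAt_integral_of_dominated_loc_of_deriv_le (Metric.ball_mem_nhds β₀ one_pos)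
    (Eventually.of_forall fun β =>
      (integrable_pow_mul_mul_cexp hb hw_meas hw n β).aestronglyMeasurable)
    (integrable_pow_mul_mul_cexp hb hw_meas hw n β₀)
    (integrable_pow_mul_mul_cexp hb hw_meas hw (n + 1) β₀).aestronglyMeasurable
    (ae_of_all _ hbound) (integrable_pow_abs_mul_exp_neg_mul_sq_add_mul_abs hb _ (n + 1))
    (ae_of_all _ hderiv)).2

end GaussianDecay

noncomputable def cubicWeight (α : ℝ) (x : ℝ) : ℂ :=
  cexp (-(x : ℂ) ^ 2 / 2 + I * α * (x : ℂ) ^ 3)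

theorem continuous_cubicWeight (α : ℝ) : Continuous (cubicWeight α) := by
  unfold cubicWeight; fun_prop

theorem norm_cubicWeight (α x : ℝ) : ‖cubicWeight α x‖ = Real.exp (-(1 / 2) * x ^ 2) := by
  rw [cubicWeight, norm_exp]
  congr 1
  simp [← ofReal_pow]
  ring

theorem hasDerivAt_cubicWeight (α x : ℝ) :
    HasDerivAt (cubicWeight α) ((3 * I * α * x ^ 2 - x) * cubicWeight α x) x := by
  have hphase : HasDerivAt (fun z : ℂ => -z ^ 2 / 2 + I * α * z ^ 3)
      (3 * I * α * x ^ 2 - x) x := by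
    refine (((hasDerivAt_pow 2 (x : ℂ)).neg.div_const 2).add
      ((hasDerivAt_pow 3 (x : ℂ)).const_mul (I * α))).congr_deriv ?_
    norm_num
    ring
  exact hphase.comp_ofReal.cexp.congr_deriv (mul_comm _ _)

theorem cubicZ_eq_laplaceMoment (β : ℂ) (α : ℝ) :
    cubicZ β α = (1 / √(2 * π) : ℝ) * laplaceMoment (cubicWeight α) 0 β := by
  simp only [cubicZ, laplaceMoment, cubicWeight, pow_zero, one_mul, ← Complex.exp_add]

theorem hasDerivAt_laplaceMoment_cubicWeight (α : ℝ) (n : ℕ) (β : ℂ) :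
    HasDerivAt (laplaceMoment (cubicWeight α) n) (laplaceMoment (cubicWeight α) (n + 1) β) β :=
  hasDerivAt_laplaceMoment one_half_pos (continuous_cubicWeight α).aestronglyMeasurable
    (fun x => (norm_cubicWeight α x).le) n β

theorem laplaceMoment_cubicWeight_dyson_schwinger (α : ℝ) (β : ℂ) :
    3 * I * α * laplaceMoment (cubicWeight α) 2 β - laplaceMoment (cubicWeight α) 1 β
      + β * laplaceMoment (cubicWeight α) 0 β = 0 := by
  set f : ℝ → ℂ := fun x => cubicWeight α x * cexp (β * x)
  have hmoment (n : ℕ) : Integrable fun x : ℝ => (x : ℂ) ^ n * f x := by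
    simpa only [f, mul_assoc] using integrable_pow_mul_mul_cexp one_half_pos
      (continuous_cubicWeight α).aestronglyMeasurable (fun x => (norm_cubicWeight α x).le) n β
  have hf' (x : ℝ) : HasDerivAt f ((3 * I * α * x ^ 2 - x + β) * f x) x := by
    have hexp : HasDerivAt (fun t : ℝ => cexp (β * t)) (cexp (β * x) * β) x := by
      simpa using ((hasDerivAt_id (x : ℂ)).const_mul β).cexp.comp_ofReal
    exact ((hasDerivAt_cubicWeight α x).mul hexp).congr_deriv (by ring)
  have hsplit : (fun x : ℝ => (3 * I * α * x ^ 2 - x + β) * f x) = fun x : ℝ =>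
      3 * I * α * ((x : ℂ) ^ 2 * f x) - (x : ℂ) ^ 1 * f x + β * ((x : ℂ) ^ 0 * f x) := by
    funext x; ring
  have hf'_int : Integrable fun x : ℝ => (3 * I * α * x ^ 2 - x + β) * f x := by
    rw [hsplit]
    exact (((hmoment 2).const_mul _).sub (hmoment 1)).add ((hmoment 0).const_mul β)
  have hzero :=
    integral_eq_zero_of_hasDerivAt_of_integrable hf' hf'_int (by simpa using hmoment 0)
  rw [hsplit, integral_add, integral_sub, integral_const_mul, integral_const_mul] at hzero
  · simpa only [laplaceMoment, mul_assoc] using hzero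
  exacts [(hmoment 2).const_mul _, hmoment 1, ((hmoment 2).const_mul _).sub (hmoment 1),
    (hmoment 0).const_mul β]

/-- The Dyson–Schwinger equation of the cubic model: `Z` is twice complex-differentiable
in `β` and `3iα ∂²Z/∂β² - ∂Z/∂β + β Z = 0`. -/
theorem cubicZ_dyson_schwinger :
    (∀ α : ℝ, Differentiable ℂ (fun β : ℂ => cubicZ β α)) ∧
    (∀ α : ℝ, Differentiable ℂ (deriv (fun β : ℂ => cubicZ β α))) ∧
    ∀ (β : ℂ) (α : ℝ),
      3 * Complex.I * α * deriv (deriv (fun b : ℂ => cubicZ b α)) β -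
        deriv (fun b : ℂ => cubicZ b α) β + β * cubicZ β α = 0 := by
  set C : ℂ := ((1 / √(2 * π) : ℝ) : ℂ)
  have hZ_eq (α : ℝ) :
      (fun b : ℂ => cubicZ b α) = fun b => C * laplaceMoment (cubicWeight α) 0 b :=
    funext fun b => cubicZ_eq_laplaceMoment b α
  have hZ_deriv (α : ℝ) (β : ℂ) :
      HasDerivAt (fun b : ℂ => cubicZ b α) (C * laplaceMoment (cubicWeight α) 1 β) β := by
    rw [hZ_eq]
    exact (hasDerivAt_laplaceMoment_cubicWeight α 0 β).const_mul C
  have hZ_deriv2 (α : ℝ) (β : ℂ) :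
      HasDerivAt (deriv fun b : ℂ => cubicZ b α) (C * laplaceMoment (cubicWeight α) 2 β) β := by
    rw [funext fun b => (hZ_deriv α b).deriv]
    exact (hasDerivAt_laplaceMoment_cubicWeight α 1 β).const_mul C
  refine ⟨fun α β => (hZ_deriv α β).differentiableAt,
    fun α β => (hZ_deriv2 α β).differentiableAt, fun β α => ?_⟩
  rw [(hZ_deriv2 α β).deriv, (hZ_deriv α β).deriv, cubicZ_eq_laplaceMoment]
  linear_combination C * laplaceMoment_cubicWeight_dyson_schwinger α β
end
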